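/- Let p ∈ (0, 1/2), let Θ be uniform on {p, 1−p}, and let Y given Θ be Bernoulli(Θ). The strategy profile in which the informed forecaster (who observes Θ) reports 0 when Θ = p and 1 when Θ = 1−p, and the uninformed forecaster reports a uniform random element of {0,1} independent of (Θ, Y), is a Nash equilibrium of the single-event two-forecaster Simple Max game: no forecaster can strictly increase her win probability by a unilateral deviation to any (possibly mixed) strategy measurable with respect to her own information. -/
import Mathlib


open MeasureTheory

noncomputable section

/-- Single-event two-forecaster Simple Max utility with the quadratic score: the forecaster
reporting `a` against an opponent reporting `b`, on outcome `y`, wins (utility 1) if her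
report is strictly closer to `y`, ties (utility 1/2) if equidistant, and loses (utility 0)
otherwise. -/
def u1 (a b y : ℝ) : ℝ :=
  if |a - y| < |b - y| then 1 else if |a - y| = |b - y| then 1 / 2 else 0

lemma u1_00 (a : ℝ) : u1 a 0 0 = if a = 0 then 1/2 else 0 := by
  simp [u1, abs_eq_zero, not_lt.2 (abs_nonneg (a - 0))]

lemma u1_01 {a : ℝ} (h0 : 0 ≤ a) (h1 : a ≤ 1) : u1 a 0 1 = if a = 0 then 1/2 else 1 := by
  have habs : |a - 1| = 1 - a := by rw [abs_of_nonpos (by linarith)]; ring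
  rcases eq_or_ne a 0 with rfl | h
  · simp [u1, habs]
  · have : (0:ℝ) < a := lt_of_le_of_ne h0 (Ne.symm h)
    simp only [u1, habs]
    rw [if_pos (by norm_num; linarith), if_neg h]

lemma u1_10 {a : ℝ} (h0 : 0 ≤ a) (h1 : a ≤ 1) : u1 a 1 0 = if a = 1 then 1/2 else 1 := by
  have habs : |a - 0| = a := by rw [sub_zero, abs_of_nonneg h0]
  rcases eq_or_ne a 1 with rfl | h
  · simp [u1, habs]
  · have : a < 1 := lt_of_le_of_ne h1 h
    simp only [u1, habs]
    rw [if_pos (by norm_num; linarith), if_neg h]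

lemma u1_11 (a : ℝ) : u1 a 1 1 = if a = 1 then 1/2 else 0 := by
  have : a - 1 = 0 ↔ a = 1 := sub_eq_zero
  simp [u1, abs_eq_zero, not_lt.2 (abs_nonneg (a - 1)), this]

lemma integral_le_const {μ : Measure ℝ} [IsProbabilityMeasure μ] {f : ℝ → ℝ} {C : ℝ}
    (hC : 0 ≤ C) (h : ∀ᵐ a ∂μ, f a ≤ C) : ∫ a, f a ∂μ ≤ C := by
  by_cases hf : Integrable f μ
  · calc ∫ a, f a ∂μ ≤ ∫ _, C ∂μ := integral_mono_ae hf (integrable_const C) h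
      _ = C := by simp
  · rw [integral_undef hf]; exact hC

/-- **Nash equilibrium of the single-event game.** Let `Θ` be uniform on `{p, 1−p}` for
`0 < p < 1/2` and `Y` given `Θ` be Bernoulli(Θ).  The profile where the informed forecaster
reports `0` when `Θ = p` and `1` when `Θ = 1−p`, and the uninformed forecaster reports a
uniform random element of `{0,1}` independently, is a Nash equilibrium: for any mixed
deviation `τ` of the informed forecaster (a kernel from her observation `Θ ∈ {p, 1−p}` to a
distribution over reports in `[0,1]`) her win probability is at most her equilibrium payoff
`3/4 − p/2`, and for any mixed deviation `ρ` of the uninformed forecaster (a distribution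
over reports in `[0,1]`, independent of `(Θ, Y)`) her win probability is at most her
equilibrium payoff `1/4 + p/2`.  (The displayed integrals are the deviation win
probabilities, expanded over the finitely many values of `Θ`, `Y` and the opponent's
equilibrium report.) -/
theorem single_event_nash_equilibrium (p : ℝ) (hp0 : 0 < p) (hp : p < 1 / 2)
    (τ : ℝ → Measure ℝ)
    (hτp : IsProbabilityMeasure (τ p)) (hτq : IsProbabilityMeasure (τ (1 - p)))
    (hτps : ∀ᵐ a ∂(τ p), a ∈ Set.Icc (0 : ℝ) 1)
    (hτqs : ∀ᵐ a ∂(τ (1 - p)), a ∈ Set.Icc (0 : ℝ) 1)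
    (ρ : Measure ℝ) (hρ : IsProbabilityMeasure ρ)
    (hρs : ∀ᵐ b ∂ρ, b ∈ Set.Icc (0 : ℝ) 1) :
    (1 / 2) * (∫ a, ((1 / 2) * ((1 - p) * u1 a 0 0 + p * u1 a 0 1) +
          (1 / 2) * ((1 - p) * u1 a 1 0 + p * u1 a 1 1)) ∂(τ p)) +
      (1 / 2) * (∫ a, ((1 / 2) * (p * u1 a 0 0 + (1 - p) * u1 a 0 1) +
          (1 / 2) * (p * u1 a 1 0 + (1 - p) * u1 a 1 1)) ∂(τ (1 - p)))
        ≤ 3 / 4 - p / 2 ∧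
    (∫ b, ((1 / 2) * ((1 - p) * u1 b 0 0 + p * u1 b 0 1) +
          (1 / 2) * (p * u1 b 1 0 + (1 - p) * u1 b 1 1)) ∂ρ)
        ≤ 1 / 4 + p / 2 := by
  have hC1 : (0:ℝ) ≤ 3/4 - p/2 := by linarith
  have hC2 : (0:ℝ) ≤ 1/4 + p/2 := by linarith
  have I1 : (∫ a, ((1 / 2) * ((1 - p) * u1 a 0 0 + p * u1 a 0 1) +
          (1 / 2) * ((1 - p) * u1 a 1 0 + p * u1 a 1 1)) ∂(τ p)) ≤ 3/4 - p/2 := by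
    refine integral_le_const hC1 (hτps.mono ?_)
    rintro a ⟨h0, h1⟩
    rw [u1_00, u1_01 h0 h1, u1_10 h0 h1, u1_11]
    split_ifs <;> linarith
  have I2 : (∫ a, ((1 / 2) * (p * u1 a 0 0 + (1 - p) * u1 a 0 1) +
          (1 / 2) * (p * u1 a 1 0 + (1 - p) * u1 a 1 1)) ∂(τ (1 - p))) ≤ 3/4 - p/2 := by
    refine integral_le_const hC1 (hτqs.mono ?_)
    rintro a ⟨h0, h1⟩
    rw [u1_00, u1_01 h0 h1, u1_10 h0 h1, u1_11]
    split_ifs <;> linarith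
  have I3 : (∫ b, ((1 / 2) * ((1 - p) * u1 b 0 0 + p * u1 b 0 1) +
          (1 / 2) * (p * u1 b 1 0 + (1 - p) * u1 b 1 1)) ∂ρ) ≤ 1/4 + p/2 := by
    refine integral_le_const hC2 (hρs.mono ?_)
    rintro b ⟨h0, h1⟩
    rw [u1_00, u1_01 h0 h1, u1_10 h0 h1, u1_11]
    split_ifs <;> linarith
  exact ⟨by linarith, I3⟩

end
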